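/- arXiv:2506.18618 — 2 statements merged into one kernel-verified Lean document; each statement's English description precedes it below -/
import Mathlib

section
/- Let S be a symmetric conjugation-invariant generating set of G, and suppose q₁,...,q_m are homogeneous quasimorphisms on G, each bounded on S, and p₁,...,p_m ∈ G satisfy q_k(p_j) = δ_{kj}. Then the map f : ℤ^m → G, f(i₁,...,i_m) = p₁^{i₁}⋯p_m^{i_m}, is a quasi-isometric embedding of (ℤ^m, ℓ¹) into (G, d_S): there exist constants A ≥ 1, B ≥ 0 with A⁻¹·‖i−j‖₁ − B ≤ d_S(f(i), f(j)) ≤ A·‖i−j‖₁ + B for all i, j ∈ ℤ^m. -/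
/-- The word norm of `g` with respect to a generating set `S`. -/
noncomputable def wordNorm {G : Type*} [Group G] (S : Set G) (g : G) : ℕ :=
  sInf {n | ∃ l : List G, (∀ x ∈ l, x ∈ S) ∧ l.prod = g ∧ l.length = n}

/-- The (ordered) product `p₁^{i₁} ⋯ p_m^{i_m}`. -/
def orderedPow {G : Type*} [Group G] {m : ℕ} (p : Fin m → G) (i : Fin m → ℤ) : G :=
  ((List.finRange m).map fun k => p k ^ i k).prod

section Aux
variable {G : Type*} [Group G] {S : Set G}

lemma wn_exists_repr (hgen : Subgroup.closure S = ⊤) (hsym : ∀ s ∈ S, s⁻¹ ∈ S) (g : G) :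
    ∃ l : List G, (∀ x ∈ l, x ∈ S) ∧ l.prod = g := by
  have hg : g ∈ (Subgroup.closure S).toSubmonoid := by
    rw [hgen]; trivial
  rw [Subgroup.closure_toSubmonoid] at hg
  obtain ⟨l, hl, hp⟩ := Submonoid.exists_list_of_mem_closure hg
  refine ⟨l, fun x hx => ?_, hp⟩
  rcases hl x hx with h | h
  · exact h
  · have := hsym _ h; simpa using this

lemma wn_set_nonempty (hgen : Subgroup.closure S = ⊤) (hsym : ∀ s ∈ S, s⁻¹ ∈ S) (g : G) :
    {n | ∃ l : List G, (∀ x ∈ l, x ∈ S) ∧ l.prod = g ∧ l.length = n}.Nonempty := by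
  obtain ⟨l, h1, h2⟩ := wn_exists_repr hgen hsym g
  exact ⟨l.length, l, h1, h2, rfl⟩

lemma wn_exists_min (hgen : Subgroup.closure S = ⊤) (hsym : ∀ s ∈ S, s⁻¹ ∈ S) (g : G) :
    ∃ l : List G, (∀ x ∈ l, x ∈ S) ∧ l.prod = g ∧ l.length = wordNorm S g :=
  Nat.sInf_mem (wn_set_nonempty hgen hsym g)

lemma wn_le (g : G) (l : List G) (h1 : ∀ x ∈ l, x ∈ S) (h2 : l.prod = g) :
    wordNorm S g ≤ l.length :=
  Nat.sInf_le ⟨l, h1, h2, rfl⟩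

lemma wn_mul_le (hgen : Subgroup.closure S = ⊤) (hsym : ∀ s ∈ S, s⁻¹ ∈ S) (g h : G) :
    wordNorm S (g * h) ≤ wordNorm S g + wordNorm S h := by
  obtain ⟨l1, a1, b1, c1⟩ := wn_exists_min hgen hsym g
  obtain ⟨l2, a2, b2, c2⟩ := wn_exists_min hgen hsym h
  have := wn_le (g * h) (l1 ++ l2) (by
    intro x hx; rcases List.mem_append.mp hx with h' | h'
    · exact a1 x h'
    · exact a2 x h') (by rw [List.prod_append, b1, b2])
  simpa [c1, c2] using this

lemma wn_conj_le (hgen : Subgroup.closure S = ⊤) (hsym : ∀ s ∈ S, s⁻¹ ∈ S)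
    (hconj : ∀ k : G, ∀ s ∈ S, k * s * k⁻¹ ∈ S) (y g : G) :
    wordNorm S (y * g * y⁻¹) ≤ wordNorm S g := by
  obtain ⟨l, a, b, c⟩ := wn_exists_min hgen hsym g
  have := wn_le (y * g * y⁻¹) (l.map fun x => y * x * y⁻¹)
    (by intro x hx
        obtain ⟨z, hz, rfl⟩ := List.mem_map.mp hx
        exact hconj y z (a z hz))
    ?_
  · simpa [c] using this
  · rw [← b]; clear a b c
    induction l with
    | nil => simp
    | cons x l ih => simp only [List.map_cons, List.prod_cons, ih]; group

lemma wn_zpow_le (hsym : ∀ s ∈ S, s⁻¹ ∈ S) {s : G} (hs : s ∈ S) (n : ℤ) :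
    wordNorm S (s ^ n) ≤ n.natAbs := by
  cases n with
  | ofNat k =>
    have := wn_le (S := S) (s ^ (k : ℤ)) (List.replicate k s)
      (by intro x hx; rw [List.eq_of_mem_replicate hx]; exact hs)
      (by rw [List.prod_replicate]; exact (zpow_natCast s k).symm)
    simpa using this
  | negSucc k =>
    have := wn_le (S := S) (s ^ (Int.negSucc k)) (List.replicate (k+1) s⁻¹)
      (by intro x hx; rw [List.eq_of_mem_replicate hx]; exact hsym s hs)
      (by rw [List.prod_replicate, zpow_negSucc, inv_pow])
    simpa using this

lemma wn_pairs (hgen : Subgroup.closure S = ⊤) (hsym : ∀ s ∈ S, s⁻¹ ∈ S)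
    (hconj : ∀ k : G, ∀ s ∈ S, k * s * k⁻¹ ∈ S) :
    ∀ l : List (G × G),
      wordNorm S ((l.map Prod.fst).prod * ((l.map Prod.snd).prod)⁻¹) ≤
        (l.map fun z => wordNorm S (z.1 * z.2⁻¹)).sum := by
  intro l
  induction l with
  | nil => simpa using wn_le (S := S) 1 [] (by simp) (by simp)
  | cons z l ih =>
    have key : ((z :: l).map Prod.fst).prod * (((z :: l).map Prod.snd).prod)⁻¹
        = (z.1 * z.2⁻¹) * (z.2 * ((l.map Prod.fst).prod * ((l.map Prod.snd).prod)⁻¹) * z.2⁻¹) := by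
      simp only [List.map_cons, List.prod_cons]; group
    rw [key]
    calc wordNorm S _ ≤ wordNorm S (z.1 * z.2⁻¹) +
        wordNorm S (z.2 * ((l.map Prod.fst).prod * ((l.map Prod.snd).prod)⁻¹) * z.2⁻¹) :=
          wn_mul_le hgen hsym _ _
      _ ≤ wordNorm S (z.1 * z.2⁻¹) + wordNorm S ((l.map Prod.fst).prod * ((l.map Prod.snd).prod)⁻¹) := by
          exact add_le_add le_rfl (wn_conj_le hgen hsym hconj _ _)
      _ ≤ (List.map (fun z => wordNorm S (z.1 * z.2⁻¹)) (z :: l)).sum := by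
          simp only [List.map_cons, List.sum_cons]; exact add_le_add le_rfl ih

lemma q_list_est (q : G → ℝ) (Dk : ℝ) (hdef : ∀ g h : G, |q (g * h) - q g - q h| ≤ Dk)
    (hq1 : q 1 = 0) : ∀ l : List G, |q l.prod - (l.map q).sum| ≤ Dk * l.length := by
  intro l
  induction l with
  | nil => simp [hq1]
  | cons x l ih =>
    simp only [List.prod_cons, List.map_cons, List.sum_cons, List.length_cons]
    calc |q (x * l.prod) - (q x + (l.map q).sum)|
        = |(q (x * l.prod) - q x - q l.prod) + (q l.prod - (l.map q).sum)| := by ring_nf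
      _ ≤ |q (x * l.prod) - q x - q l.prod| + |q l.prod - (l.map q).sum| := abs_add_le _ _
      _ ≤ Dk + Dk * l.length := add_le_add (hdef x l.prod) ih
      _ = Dk * ((l.length : ℝ) + 1) := by ring
      _ = Dk * ((l.length + 1 : ℕ) : ℝ) := by push_cast; ring

lemma q_sum_bound (q : G → ℝ) (C : ℝ) :
    ∀ l : List G, (∀ x ∈ l, |q x| ≤ C) → |(l.map q).sum| ≤ C * l.length := by
  intro l
  induction l with
  | nil => simp
  | cons x l ih =>
    intro h
    simp only [List.map_cons, List.sum_cons, List.length_cons]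
    calc |q x + (l.map q).sum| ≤ |q x| + |(l.map q).sum| := abs_add_le _ _
      _ ≤ C + C * l.length := add_le_add (h x (by simp)) (ih fun y hy => h y (by simp [hy]))
      _ = C * ((l.length : ℝ) + 1) := by ring
      _ = C * ((l.length + 1 : ℕ) : ℝ) := by push_cast; ring

lemma q_le_wn (hgen : Subgroup.closure S = ⊤) (hsym : ∀ s ∈ S, s⁻¹ ∈ S)
    (q : G → ℝ) (Dk C : ℝ) (hdef : ∀ g h : G, |q (g * h) - q g - q h| ≤ Dk)
    (hq1 : q 1 = 0) (hbd : ∀ s ∈ S, |q s| ≤ C) (g : G) :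
    |q g| ≤ (C + Dk) * wordNorm S g := by
  obtain ⟨l, a, b, c⟩ := wn_exists_min hgen hsym g
  calc |q g| = |(q g - (l.map q).sum) + (l.map q).sum| := by ring_nf
    _ ≤ |q g - (l.map q).sum| + |(l.map q).sum| := abs_add_le _ _
    _ ≤ Dk * l.length + C * l.length := by
        refine add_le_add ?_ (q_sum_bound q C l fun x hx => hbd x (a x hx))
        rw [← b]; exact q_list_est q Dk hdef hq1 l
    _ = (C + Dk) * l.length := by ring
    _ = (C + Dk) * wordNorm S g := by rw [c]

end Aux

lemma orderedPow_eq_ofFn {G : Type*} [Group G] {m : ℕ} (p : Fin m → G) (i : Fin m → ℤ) :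
    orderedPow p i = (List.ofFn fun k => p k ^ i k).prod := by
  rw [orderedPow, List.ofFn_eq_map]

/-- Given homogeneous quasimorphisms `q₁,...,q_m` bounded on a symmetric
conjugation-invariant generating set `S`, and `p₁,...,p_m ∈ S` with `q_k(p_j) = δ_{kj}`,
the map `f(i) = p₁^{i₁}⋯p_m^{i_m}` is a quasi-isometric embedding of `(ℤ^m, ℓ¹)` into
`(G, d_S)`. -/
theorem stmt7 {G : Type*} [Group G] (S : Set G)
    (hgen : Subgroup.closure S = ⊤)
    (hsym : ∀ s ∈ S, s⁻¹ ∈ S)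
    (hconj : ∀ k : G, ∀ s ∈ S, k * s * k⁻¹ ∈ S)
    (m : ℕ) (q : Fin m → G → ℝ) (D : Fin m → ℝ)
    (hdef : ∀ k, ∀ g h : G, |q k (g * h) - q k g - q k h| ≤ D k)
    (hhom : ∀ k, ∀ (g : G) (r : ℤ), q k (g ^ r) = r * q k g)
    (C : ℝ) (hbd : ∀ k, ∀ s ∈ S, |q k s| ≤ C)
    (p : Fin m → G) (hp : ∀ j, p j ∈ S)
    (hdelta : ∀ k j, q k (p j) = if k = j then (1 : ℝ) else 0) :
    ∃ A : ℝ, 1 ≤ A ∧ ∃ B : ℝ, 0 ≤ B ∧ ∀ i j : Fin m → ℤ,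
      A⁻¹ * ((∑ k, |i k - j k| : ℤ) : ℝ) - B ≤
          (wordNorm S (orderedPow p i * (orderedPow p j)⁻¹) : ℝ) ∧
      (wordNorm S (orderedPow p i * (orderedPow p j)⁻¹) : ℝ) ≤
          A * ((∑ k, |i k - j k| : ℤ) : ℝ) + B := by
  set C' : ℝ := max C 0 with hC'
  have hC'nn : 0 ≤ C' := le_max_right _ _
  have hbd' : ∀ k, ∀ s ∈ S, |q k s| ≤ C' := fun k s hs => (hbd k s hs).trans (le_max_left _ _)
  have hDnn : ∀ k, 0 ≤ D k := fun k => (abs_nonneg _).trans (hdef k 1 1)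
  have hq1 : ∀ k, q k 1 = 0 := fun k => by simpa using hhom k 1 0
  set T : ℝ := ∑ k, D k with hT
  have hTnn : 0 ≤ T := Finset.sum_nonneg fun k _ => hDnn k
  set E : ℝ := ∑ k, (C' + D k) with hE
  have hEnn : 0 ≤ E := Finset.sum_nonneg fun k _ => add_nonneg hC'nn (hDnn k)
  refine ⟨1 + E, by linarith, (2 * m + 1) * T, by positivity, fun i j => ?_⟩
  set A : ℝ := 1 + E with hA
  set B : ℝ := (2 * m + 1) * T with hB
  have hA1 : (1 : ℝ) ≤ A := by simp only [hA]; linarith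
  have hApos : (0 : ℝ) < A := by linarith
  have hBnn : (0 : ℝ) ≤ B := by positivity
  set g : G := orderedPow p i * (orderedPow p j)⁻¹ with hg
  set N : ℝ := (wordNorm S g : ℝ) with hN
  have hNnn : 0 ≤ N := Nat.cast_nonneg _
  set Sig : ℝ := ∑ k, |((i k - j k : ℤ) : ℝ)| with hSig
  have hSignn : 0 ≤ Sig := Finset.sum_nonneg fun k _ => abs_nonneg _
  have hcast : ((∑ k, |i k - j k| : ℤ) : ℝ) = Sig := by
    rw [hSig]; push_cast; rfl
  -- Upper bound
  have hupN : wordNorm S g ≤ ∑ k, (i k - j k).natAbs := by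
    have key := wn_pairs hgen hsym hconj (List.ofFn fun k => (p k ^ i k, p k ^ j k))
    have e1 : (List.map Prod.fst (List.ofFn fun k => (p k ^ i k, p k ^ j k))).prod
        = orderedPow p i := by
      rw [List.map_ofFn, orderedPow_eq_ofFn]; rfl
    have e2 : (List.map Prod.snd (List.ofFn fun k => (p k ^ i k, p k ^ j k))).prod
        = orderedPow p j := by
      rw [List.map_ofFn, orderedPow_eq_ofFn]; rfl
    rw [e1, e2] at key
    refine le_trans key ?_
    rw [List.map_ofFn, List.sum_ofFn]
    refine Finset.sum_le_sum fun k _ => ?_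
    have : (p k ^ i k * (p k ^ j k)⁻¹ : G) = p k ^ (i k - j k) := (zpow_sub (p k) _ _).symm
    rw [Function.comp_apply, this]
    exact wn_zpow_le hsym (hp k) _
  have hupper : N ≤ Sig := by
    rw [hN, hSig]
    calc ((wordNorm S g : ℕ) : ℝ) ≤ ((∑ k, (i k - j k).natAbs : ℕ) : ℝ) := by
          exact_mod_cast hupN
      _ = ∑ k, |((i k - j k : ℤ) : ℝ)| := by
          push_cast [Nat.cast_natAbs]; rfl
  -- Lower bound
  have est1 : ∀ (x : Fin m → ℤ) (k : Fin m), |q k (orderedPow p x) - (x k : ℝ)| ≤ D k * m := by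
    intro x k
    have hl := q_list_est (q k) (D k) (hdef k) (hq1 k) (List.ofFn fun l => p l ^ x l)
    have hsum : ((List.ofFn fun l => p l ^ x l).map (q k)).sum = (x k : ℝ) := by
      rw [List.map_ofFn, List.sum_ofFn]
      have : ∀ l : Fin m, (q k ∘ fun l => p l ^ x l) l = if k = l then (x l : ℝ) else 0 := by
        intro l
        simp only [Function.comp_apply, hhom k (p l) (x l), hdelta k l]
        split <;> simp
      rw [Finset.sum_congr rfl fun l _ => this l]
      simp
    rw [orderedPow_eq_ofFn, ← hsum]
    simpa using hl
  have est2 : ∀ k : Fin m, |q k g - ((i k - j k : ℤ) : ℝ)| ≤ D k * (2 * m + 1) := by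
    intro k
    have h1 : |q k g - q k (orderedPow p i) - q k ((orderedPow p j)⁻¹)| ≤ D k := by
      have := hdef k (orderedPow p i) ((orderedPow p j)⁻¹)
      rw [hg]; convert this using 3
    have hinv : q k ((orderedPow p j)⁻¹) = -q k (orderedPow p j) := by
      have := hhom k (orderedPow p j) (-1)
      simpa [zpow_neg_one] using this
    rw [hinv] at h1
    have h2 := est1 i k
    have h3 := est1 j k
    have hr : D k * (2 * (m : ℝ) + 1) = D k + D k * m + D k * m := by ring
    rw [abs_le] at h1 h2 h3 ⊢
    push_cast
    constructor <;> [nlinarith; nlinarith]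
  have hlow : Sig ≤ E * N + B := by
    have hterm : ∀ k : Fin m, |((i k - j k : ℤ) : ℝ)| ≤ (C' + D k) * N + D k * (2 * m + 1) := by
      intro k
      have hq := q_le_wn hgen hsym (q k) (D k) C' (hdef k) (hq1 k) (hbd' k) g
      have := est2 k
      calc |((i k - j k : ℤ) : ℝ)| ≤ |q k g| + |q k g - ((i k - j k : ℤ) : ℝ)| := by
            have := abs_sub_abs_le_abs_sub ((i k - j k : ℤ) : ℝ) (q k g)
            have h2 := abs_sub_comm ((i k - j k : ℤ) : ℝ) (q k g)
            linarith [abs_abs_sub_abs_le_abs_sub ((i k - j k : ℤ) : ℝ) (q k g),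
              neg_abs_le (|((i k - j k : ℤ) : ℝ)| - |q k g|)]
        _ ≤ (C' + D k) * N + D k * (2 * m + 1) := add_le_add hq this
    calc Sig ≤ ∑ k, ((C' + D k) * N + D k * (2 * m + 1)) := Finset.sum_le_sum fun k _ => hterm k
      _ = E * N + B := by
          rw [Finset.sum_add_distrib, ← Finset.sum_mul, ← Finset.sum_mul, hE, hB, hT]
          ring
  rw [hcast]
  constructor
  · have hSigA : Sig ≤ A * (N + B) := by nlinarith
    have : A⁻¹ * Sig ≤ N + B := by
      rw [inv_mul_le_iff₀ hApos]; exact hSigA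
    linarith
  · nlinarith
end

section
/- Let w be a nonempty reduced word over the alphabet {a₁,...,a_n, a₁⁻¹,...,a_n⁻¹} and let x be a reduced word. Define C_w(x) to be the number of (possibly overlapping) occurrences of w as a subword of x, and define q_w(x) = C_w(x) − C_{w⁻¹}(x). Then q_w is a quasimorphism on the free group F_n: there is a constant D (depending only on the length of w) with |q_w(xy) − q_w(x) − q_w(y)| ≤ D for all x, y ∈ F_n. -/
/-- The number of (possibly overlapping) occurrences of `w` as a contiguous subword
of `x`. -/
def countOcc {α : Type*} [DecidableEq α] (w x : List α) : ℕ :=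
  ((List.range (x.length + 1)).filter fun i => (x.drop i).take w.length = w).length

/-- The counting function `q_w(x) = C_w(x) − C_{w⁻¹}(x)`, counting occurrences of the
reduced word of `w` minus occurrences of the reduced word of `w⁻¹` in the reduced word
of `x`. -/
def brooksCount {n : ℕ} (w x : FreeGroup (Fin n)) : ℝ :=
  ((countOcc w.toWord x.toWord : ℤ) - (countOcc (w⁻¹).toWord x.toWord : ℤ) : ℤ)

namespace Stmt13Aux

open List

section Count

variable {α : Type*} [DecidableEq α]

lemma countOcc_eq_card (w x : List α) :
    countOcc w x = ((Finset.range (x.length + 1)).filter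
      fun i => (x.drop i).take w.length = w).card := rfl

lemma match_le {w x : List α} (hw : w ≠ []) {i : ℕ}
    (h : (x.drop i).take w.length = w) : i + w.length ≤ x.length := by
  have hlen := congrArg List.length h
  rw [List.length_take, List.length_drop] at hlen
  have h1 : w.length ≤ x.length - i := min_eq_right_iff.mp ?_
  · have hw' : 0 < w.length := List.length_pos_iff.mpr hw
    omega
  · rw [min_comm]; exact hlen

lemma occ_left {w : List α} (p q : List α) {i : ℕ}
    (h : i + w.length ≤ p.length) :
    ((p ++ q).drop i).take w.length = (p.drop i).take w.length := by
  rw [List.drop_append_of_le_length (by omega), List.take_append_of_le_length]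
  rw [List.length_drop]; omega

lemma occ_right {w : List α} (p q : List α) (j : ℕ) :
    ((p ++ q).drop (p.length + j)).take w.length = (q.drop j).take w.length := by
  rw [List.drop_append]
  simp [List.drop_eq_nil_of_le (show p.length ≤ p.length + j by omega)]

lemma countOcc_append_bounds {w : List α} (hw : w ≠ []) (p q : List α) :
    countOcc w p + countOcc w q ≤ countOcc w (p ++ q) ∧
      countOcc w (p ++ q) ≤ countOcc w p + countOcc w q + w.length := by
  classical
  have hL1 : 1 ≤ w.length := List.length_pos_iff.mpr hw
  set L := w.length with hLdef
  set Sp := (Finset.range (p.length + 1)).filter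
    (fun i => (p.drop i).take L = w) with hSp
  set Sq := (Finset.range (q.length + 1)).filter
    (fun i => (q.drop i).take L = w) with hSq
  set Spq := (Finset.range ((p ++ q).length + 1)).filter
    (fun i => ((p ++ q).drop i).take L = w) with hSpq
  have hmemp : ∀ i, i ∈ Sp ↔ i ≤ p.length ∧ (p.drop i).take L = w := by
    intro i; simp [hSp, Nat.lt_succ_iff]
  have hmemq : ∀ i, i ∈ Sq ↔ i ≤ q.length ∧ (q.drop i).take L = w := by
    intro i; simp [hSq, Nat.lt_succ_iff]
  have hmempq : ∀ i, i ∈ Spq ↔ i ≤ p.length + q.length ∧ ((p ++ q).drop i).take L = w := by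
    intro i; simp [hSpq, Nat.lt_succ_iff]
  have hsub1 : Sp ⊆ Spq := by
    intro i hi
    obtain ⟨hi1, hi2⟩ := (hmemp i).mp hi
    have hb : i + L ≤ p.length := match_le hw hi2
    exact (hmempq i).mpr ⟨by omega, by rw [occ_left p q hb]; exact hi2⟩
  have hsub2 : Sq.image (· + p.length) ⊆ Spq := by
    intro i hi
    obtain ⟨j, hj, rfl⟩ := Finset.mem_image.mp hi
    obtain ⟨hj1, hj2⟩ := (hmemq j).mp hj
    refine (hmempq (j + p.length)).mpr ⟨by omega, ?_⟩
    rw [add_comm j p.length, occ_right p q j]; exact hj2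
  have hdisj : Disjoint Sp (Sq.image (· + p.length)) := by
    rw [Finset.disjoint_left]
    intro i hi hi'
    obtain ⟨_, hi2⟩ := (hmemp i).mp hi
    have hb : i + L ≤ p.length := match_le hw hi2
    obtain ⟨j, _, hji⟩ := Finset.mem_image.mp hi'
    omega
  have hcard_img : (Sq.image (· + p.length)).card = Sq.card :=
    Finset.card_image_of_injective _ (add_left_injective _)
  have hsub3 : Spq ⊆ (Sp ∪ Sq.image (· + p.length)) ∪
      Finset.Ico (p.length + 1 - L) p.length := by
    intro i hi
    obtain ⟨hi1, hi2⟩ := (hmempq i).mp hi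
    have hb : i + L ≤ (p ++ q).length := match_le hw hi2
    rw [List.length_append] at hb
    by_cases h1 : i + L ≤ p.length
    · exact Finset.mem_union_left _ (Finset.mem_union_left _
        ((hmemp i).mpr ⟨by omega, by rw [← occ_left p q h1]; exact hi2⟩))
    by_cases h2 : p.length ≤ i
    · refine Finset.mem_union_left _ (Finset.mem_union_right _ ?_)
      refine Finset.mem_image.mpr ⟨i - p.length, (hmemq _).mpr ⟨by omega, ?_⟩, by omega⟩
      rw [← occ_right p q (i - p.length), Nat.add_sub_cancel' h2]; exact hi2
    · exact Finset.mem_union_right _ (Finset.mem_Ico.mpr ⟨by omega, by omega⟩)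
  constructor
  · rw [countOcc_eq_card, countOcc_eq_card, countOcc_eq_card, ← hSp, ← hSq, ← hSpq,
      ← hcard_img, ← Finset.card_union_of_disjoint hdisj]
    exact Finset.card_le_card (Finset.union_subset hsub1 hsub2)
  · rw [countOcc_eq_card, countOcc_eq_card, countOcc_eq_card, ← hSp, ← hSq, ← hSpq]
    calc Spq.card ≤ ((Sp ∪ Sq.image (· + p.length)) ∪
          Finset.Ico (p.length + 1 - L) p.length).card := Finset.card_le_card hsub3
      _ ≤ (Sp ∪ Sq.image (· + p.length)).card +
          (Finset.Ico (p.length + 1 - L) p.length).card := Finset.card_union_le _ _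
      _ ≤ (Sp.card + (Sq.image (· + p.length)).card) +
          (Finset.Ico (p.length + 1 - L) p.length).card := by
            exact Nat.add_le_add_right (Finset.card_union_le _ _) _
      _ ≤ Sp.card + Sq.card + L := by
            rw [hcard_img, Nat.card_Ico]; omega

end Count

section Inv

variable {α : Type*} [DecidableEq α]

lemma seg (u : List (α × Bool)) {i L : ℕ} (h : i + L ≤ u.length) :
    ((FreeGroup.invRev u).drop i).take L
      = FreeGroup.invRev ((u.drop (u.length - L - i)).take L) := by
  unfold FreeGroup.invRev
  rw [List.drop_reverse, List.take_reverse, List.drop_take, ← List.map_drop, ← List.map_take]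
  congr 2
  simp only [List.length_take, List.length_map, List.length_drop]
  rw [min_eq_left (Nat.sub_le u.length i)]
  congr 1
  · omega
  · congr 1
    omega

lemma countOcc_invRev_le (w u : List (α × Bool)) (hw : w ≠ []) :
    countOcc w (FreeGroup.invRev u) ≤ countOcc (FreeGroup.invRev w) u := by
  rw [countOcc_eq_card, countOcc_eq_card]
  apply Finset.card_le_card_of_injOn (fun i => u.length - w.length - i)
  · intro i hi
    simp only [Finset.coe_filter, Finset.mem_coe, Set.mem_setOf_eq, Finset.mem_filter, Finset.mem_range, Nat.lt_succ_iff] at hi ⊢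
    obtain ⟨hi1, hi2⟩ := hi
    have hb : i + w.length ≤ (FreeGroup.invRev u).length := match_le hw hi2
    rw [FreeGroup.invRev_length] at hb
    refine ⟨by omega, ?_⟩
    rw [FreeGroup.invRev_length]
    have hseg := seg u (L := w.length) (i := i) hb
    rw [hseg] at hi2
    exact FreeGroup.invRev_injective (by rw [FreeGroup.invRev_invRev]; exact hi2.symm) |>.symm
  · intro a ha b hb hab
    simp only [Finset.coe_filter, Finset.mem_coe, Finset.mem_filter, Finset.mem_range,
      Set.mem_setOf_eq, Nat.lt_succ_iff] at ha hb
    have hba : a + w.length ≤ (FreeGroup.invRev u).length := match_le hw ha.2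
    have hbb : b + w.length ≤ (FreeGroup.invRev u).length := match_le hw hb.2
    rw [FreeGroup.invRev_length] at hba hbb
    have hab' : u.length - w.length - a = u.length - w.length - b := hab
    omega

lemma invRev_ne_nil {w : List (α × Bool)} (hw : w ≠ []) : FreeGroup.invRev w ≠ [] := by
  intro h
  apply hw
  have := congrArg List.length h
  rw [FreeGroup.invRev_length] at this
  exact List.length_eq_zero_iff.mp this

lemma countOcc_invRev (w u : List (α × Bool)) (hw : w ≠ []) :
    countOcc w (FreeGroup.invRev u) = countOcc (FreeGroup.invRev w) u := by
  refine le_antisymm (countOcc_invRev_le w u hw) ?_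
  have h := countOcc_invRev_le (FreeGroup.invRev w) (FreeGroup.invRev u) (invRev_ne_nil hw)
  rwa [FreeGroup.invRev_invRev, FreeGroup.invRev_invRev] at h

end Inv

section Decomp

variable {α : Type*} [DecidableEq α]

lemma invRev_cons (x : α × Bool) (u : List (α × Bool)) :
    FreeGroup.invRev (x :: u) = FreeGroup.invRev u ++ [(x.1, !x.2)] := by
  simp [FreeGroup.invRev]

lemma reduce_cons_nil (x : α × Bool) {L : List (α × Bool)}
    (h : FreeGroup.reduce L = []) : FreeGroup.reduce (x :: L) = [x] := by
  rw [FreeGroup.reduce.cons, h]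

lemma reduce_cons_cons (x y : α × Bool) (t : List (α × Bool)) {L : List (α × Bool)}
    (h : FreeGroup.reduce L = y :: t) :
    FreeGroup.reduce (x :: L) =
      if x.1 = y.1 ∧ x.2 = !y.2 then t else x :: y :: t := by
  rw [FreeGroup.reduce.cons, h]

lemma reduce_tail {x : α × Bool} {L : List (α × Bool)}
    (h : FreeGroup.reduce (x :: L) = x :: L) : FreeGroup.reduce L = L := by
  have hsub : (FreeGroup.reduce L).length ≤ L.length :=
    (FreeGroup.Red.sublist FreeGroup.reduce.red).length_le
  rcases r : FreeGroup.reduce L with _ | ⟨hd, tl⟩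
  · rw [reduce_cons_nil x r] at h
    injection h
  · rw [reduce_cons_cons x hd tl r] at h
    split_ifs at h with hc
    · exfalso
      have h1 := congrArg List.length h
      have h2 := congrArg List.length r
      simp only [List.length_cons] at h1 h2
      omega
    · injection h

lemma exists_decomp (a : List (α × Bool)) :
    ∀ b : List (α × Bool), FreeGroup.reduce a = a → FreeGroup.reduce b = b →
      ∃ p u q, a = p ++ u ∧ b = FreeGroup.invRev u ++ q ∧
        FreeGroup.reduce (a ++ b) = p ++ q := by
  induction a with
  | nil =>
    intro b _ hb
    exact ⟨[], [], b, rfl, by simp [FreeGroup.invRev], by simpa using hb⟩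
  | cons x a' ih =>
    intro b ha hb
    obtain ⟨p', u, q, h1, h2, h3⟩ := ih b (reduce_tail ha) hb
    rcases hpq : p' ++ q with _ | ⟨y, t⟩
    · have hred : FreeGroup.reduce (x :: (a' ++ b)) = [x] :=
        reduce_cons_nil x (by rw [h3, hpq])
      obtain ⟨hp', hq⟩ := List.append_eq_nil_iff.mp hpq
      refine ⟨[x], u, [], by simp [h1, hp'], by simp [h2, hq], ?_⟩
      rw [List.cons_append]
      exact hred
    · have hred : FreeGroup.reduce (x :: (a' ++ b)) =
          if x.1 = y.1 ∧ x.2 = !y.2 then t else x :: y :: t :=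
        reduce_cons_cons x y t (by rw [h3, hpq])
      by_cases hc : x.1 = y.1 ∧ x.2 = !y.2
      · have hy : y = (x.1, !x.2) := by
          rcases y with ⟨y1, y2⟩
          obtain ⟨hc1, hc2⟩ := hc
          simp only at hc1 hc2
          rw [Prod.mk.injEq]
          exact ⟨hc1.symm, by rw [hc2, Bool.not_not]⟩
        have hred2 : FreeGroup.reduce (x :: (a' ++ b)) = t := by
          rw [hred, if_pos hc]
        rcases p' with _ | ⟨z, p''⟩
        · -- all of a' cancels; now x cancels too
          have hq : q = y :: t := by simpa using hpq
          have ha'u : a' = u := by simpa using h1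
          refine ⟨[], x :: u, t, by simp [ha'u], ?_, ?_⟩
          · rw [invRev_cons, h2, hq, hy]
            simp
          · rw [List.nil_append, List.cons_append]
            exact hred2
        · -- contradiction with a reduced
          exfalso
          have hz : z = y := by
            have := (List.cons.injEq z (p'' ++ q) y t).mp (by simpa using hpq)
            exact this.1
          apply FreeGroup.reduce.not (L₁ := x :: a') (L₂ := []) (L₃ := p'' ++ u)
            (x := x.1) (b := x.2)
          rw [ha, h1, hz, hy]
          simp
      · have hred2 : FreeGroup.reduce (x :: (a' ++ b)) = x :: y :: t := by
          rw [hred]; simp [hc]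
        refine ⟨x :: p', u, q, by simp [h1], h2, ?_⟩
        rw [List.cons_append, hred2, List.cons_append, ← hpq]

lemma decomp_toWord {n : ℕ} (x y : FreeGroup (Fin n)) :
    ∃ p u q, x.toWord = p ++ u ∧ y.toWord = FreeGroup.invRev u ++ q ∧
      (x * y).toWord = p ++ q := by
  obtain ⟨p, u, q, h1, h2, h3⟩ :=
    exists_decomp x.toWord y.toWord x.reduce_toWord y.reduce_toWord
  refine ⟨p, u, q, h1, h2, ?_⟩
  rw [show x * y = FreeGroup.mk (x.toWord ++ y.toWord) by
    rw [← FreeGroup.mul_mk, FreeGroup.mk_toWord, FreeGroup.mk_toWord],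
    FreeGroup.toWord_mk, h3]

end Decomp

end Stmt13Aux

open Stmt13Aux in
/-- For every nonempty reduced word `w`, the counting function `q_w` is a
quasimorphism on `F_n`, with defect bounded by a constant depending only on the length
of `w`. -/
theorem stmt13 (n : ℕ) :
    ∃ D : ℕ → ℝ, ∀ w : FreeGroup (Fin n), w ≠ 1 →
      ∀ x y : FreeGroup (Fin n),
        |brooksCount w (x * y) - brooksCount w x - brooksCount w y| ≤
          D w.toWord.length := by
  refine ⟨fun L => 6 * (L : ℝ), ?_⟩
  intro w hw x y
  have hW : w.toWord ≠ [] := fun h => hw (FreeGroup.toWord_eq_nil_iff.mp h)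
  set W := w.toWord with hWdef
  have hW' : FreeGroup.invRev W ≠ [] := invRev_ne_nil hW
  obtain ⟨p, u, q, h1, h2, h3⟩ := decomp_toWord x y
  have hIW : (w⁻¹).toWord = FreeGroup.invRev W := FreeGroup.toWord_inv w
  obtain ⟨b1, b1'⟩ := countOcc_append_bounds hW p q
  obtain ⟨b2, b2'⟩ := countOcc_append_bounds hW p u
  obtain ⟨b3, b3'⟩ := countOcc_append_bounds hW (FreeGroup.invRev u) q
  obtain ⟨c1, c1'⟩ := countOcc_append_bounds hW' p q
  obtain ⟨c2, c2'⟩ := countOcc_append_bounds hW' p u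
  obtain ⟨c3, c3'⟩ := countOcc_append_bounds hW' (FreeGroup.invRev u) q
  have e1 : countOcc W (FreeGroup.invRev u) = countOcc (FreeGroup.invRev W) u :=
    countOcc_invRev _ _ hW
  have e2 : countOcc (FreeGroup.invRev W) (FreeGroup.invRev u) = countOcc W u := by
    rw [countOcc_invRev _ _ hW', FreeGroup.invRev_invRev]
  have hlen : (FreeGroup.invRev W).length = W.length := FreeGroup.invRev_length
  have key : |((countOcc W (p ++ q) : ℤ) - countOcc (FreeGroup.invRev W) (p ++ q))
      - ((countOcc W (p ++ u) : ℤ) - countOcc (FreeGroup.invRev W) (p ++ u))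
      - ((countOcc W (FreeGroup.invRev u ++ q) : ℤ)
          - countOcc (FreeGroup.invRev W) (FreeGroup.invRev u ++ q))|
      ≤ 6 * (W.length : ℤ) := by
    rw [abs_le]
    omega
  unfold brooksCount
  rw [hIW, h1, h2, h3, ← hWdef]
  show _ ≤ 6 * (W.length : ℝ)
  exact_mod_cast key
end
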